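/- Let α ∈ (0, 1/2], β ∈ [0, α/2), and let S be an (α,β)-admissible N×N real matrix (N ≥ 2). Then the image of the convex hull of V̄ under (S⊗I₂)ᵀ equals the intersection of the image of the crosspolytope P̄ under (S⊗I₂)ᵀ with the subspace H̄; that is, {(S⊗I₂)ᵀ x : x ∈ conv V̄} = {(S⊗I₂)ᵀ y : y ∈ P̄} ∩ H̄. -/

import Mathlib

open Finset

/-- The crosspolytope in `ℝ^{2N}`, identified with functions `Fin N × Fin 2 → ℝ`. -/
def crossPolytope2 (N : ℕ) : Set (Fin N × Fin 2 → ℝ) := {x | ∑ il, |x il| ≤ 1}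

/-- The codimension-2 subspace `H̄ = {x : ∑_i x(i,j) = 0 for j = 1,2}`. -/
def subspaceHbar (N : ℕ) : Set (Fin N × Fin 2 → ℝ) :=
  {x | ∀ j : Fin 2, ∑ i, x (i, j) = 0}

/-- The vertex set `V̄` of vectors `v_{p,q,j}` with `p ≠ q`, `j ∈ {1,2}`. -/
def vertexSetVbar (N : ℕ) : Set (Fin N × Fin 2 → ℝ) :=
  {v | ∃ p q : Fin N, ∃ j : Fin 2, p ≠ q ∧
    v = fun il => if il = (p, j) then (1 / 2 : ℝ) else if il = (q, j) then -(1 / 2 : ℝ) else 0}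

/-- The action of `(S ⊗ I₂)ᵀ` on `ℝ^{2N}`: `((S⊗I₂)ᵀ x)(i,j) = ∑ k, S k i * x (k,j)`. -/
def kronTr {N : ℕ} (S : Matrix (Fin N) (Fin N) ℝ) (x : Fin N × Fin 2 → ℝ) :
    Fin N × Fin 2 → ℝ :=
  fun il => ∑ k, S k il.1 * x (k, il.2)

/-- An `N × N` real matrix `S` is `(α,β)`-admissible if every row sums to `1`,
the negative part of every row sums to at least `-β`, and every pair of distinct
rows shares a column where both entries are at least `α` (neighbor-shared). -/
def Admissible {N : ℕ} (α β : ℝ) (S : Matrix (Fin N) (Fin N) ℝ) : Prop :=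
  (∀ i, ∑ j, S i j = 1) ∧ (∀ i, -β ≤ ∑ j, min (S i j) 0) ∧
    (∀ p q : Fin N, p ≠ q → ∃ i, α ≤ S p i ∧ α ≤ S q i)

/-!
In each column `j` a vector `x ∈ H̄` has positive and negative parts of equal mass `s_j`, and the
product coupling `x(p,j)⁺ x(q,j)⁻ / s_j` transports one onto the other. This writes `x` as a
nonnegative combination of the `v_{p,q,j}` with total weight `∑ |x|`, so `P̄ ∩ H̄ ⊆ conv V̄`
(using `0 ∈ conv V̄` for `N ≥ 2`), and hence `conv V̄ = P̄ ∩ H̄`. As the rows of `S` sum to `1`,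
`(S ⊗ I₂)ᵀ` preserves column sums, so the preimage of `H̄` is `H̄` and the two images agree.
-/

theorem Convex.sum_smul_mem_of_sum_le_one {ι E : Type*} [AddCommGroup E] [Module ℝ E]
    {K : Set E} (hK : Convex ℝ K) (h0 : (0 : E) ∈ K) {t : Finset ι} {w : ι → ℝ} {z : ι → E}
    (hw₀ : ∀ i ∈ t, 0 ≤ w i) (hw₁ : ∑ i ∈ t, w i ≤ 1) (hz : ∀ i ∈ t, z i ∈ K) :
    ∑ i ∈ t, w i • z i ∈ K := by
  rcases (sum_nonneg hw₀).eq_or_lt with hW | hW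
  · rwa [sum_eq_zero fun i hi => by
      rw [(sum_eq_zero_iff_of_nonneg hw₀).1 hW.symm i hi, zero_smul]]
  · have := (hK.starConvex h0).smul_mem (hK.centerMass_mem hw₀ hW hz) hW.le hw₁
    rwa [centerMass, smul_smul, mul_inv_cancel₀ hW.ne', one_smul] at this

theorem sum_mul_div_sum_eq {ι : Type*} (s : Finset ι) (b : ι → ℝ) {c : ℝ}
    (hc : ∑ i ∈ s, b i = 0 → c = 0) : ∑ i ∈ s, c * b i / ∑ i ∈ s, b i = c := by
  rw [← sum_div, ← mul_sum]
  by_cases h : ∑ i ∈ s, b i = 0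
  · simp [h, hc h]
  · exact mul_div_cancel_right₀ c h

theorem sum_posPart_eq_sum_negPart {ι : Type*} {s : Finset ι} {f : ι → ℝ}
    (hf : ∑ i ∈ s, f i = 0) : ∑ i ∈ s, (f i)⁺ = ∑ i ∈ s, (f i)⁻ := by
  rw [← sub_eq_zero, ← sum_sub_distrib]
  simpa only [posPart_sub_negPart] using hf

theorem sum_abs_eq_two_mul_sum_posPart {ι : Type*} {s : Finset ι} {f : ι → ℝ}
    (hf : ∑ i ∈ s, f i = 0) : ∑ i ∈ s, |f i| = 2 * ∑ i ∈ s, (f i)⁺ := by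
  simp only [← posPart_add_negPart, sum_add_distrib, ← sum_posPart_eq_sum_negPart hf]
  ring

section Coupling

variable {ι : Type*} [Fintype ι]

noncomputable def couplingWeight (y : ι → ℝ) (p q : ι) : ℝ :=
  (y p)⁺ * (y q)⁻ / ∑ i, (y i)⁺

theorem couplingWeight_nonneg (y : ι → ℝ) (p q : ι) : 0 ≤ couplingWeight y p q := by
  unfold couplingWeight; positivity

theorem sum_couplingWeight_right {y : ι → ℝ} (hy : ∑ i, y i = 0) (p : ι) :
    ∑ q, couplingWeight y p q = (y p)⁺ := by
  simp only [couplingWeight, sum_posPart_eq_sum_negPart hy]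
  refine sum_mul_div_sum_eq _ _ fun h => ?_
  rw [← sum_posPart_eq_sum_negPart hy] at h
  exact (sum_eq_zero_iff_of_nonneg fun i _ => posPart_nonneg (y i)).1 h p (mem_univ p)

theorem sum_couplingWeight_left {y : ι → ℝ} (hy : ∑ i, y i = 0) (q : ι) :
    ∑ p, couplingWeight y p q = (y q)⁻ := by
  simp only [couplingWeight, mul_comm _ (y q)⁻]
  refine sum_mul_div_sum_eq _ _ fun h => ?_
  rw [sum_posPart_eq_sum_negPart hy] at h
  exact (sum_eq_zero_iff_of_nonneg fun i _ => negPart_nonneg (y i)).1 h q (mem_univ q)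

theorem sum_sum_couplingWeight {y : ι → ℝ} (hy : ∑ i, y i = 0) :
    ∑ p, ∑ q, couplingWeight y p q = (∑ i, |y i|) / 2 := by
  simp only [sum_couplingWeight_right hy, sum_abs_eq_two_mul_sum_posPart hy]
  ring

end Coupling

section Decomposition

variable {ι κ : Type*} [Fintype ι] [Fintype κ] [DecidableEq ι] [DecidableEq κ]

theorem sum_sum_smul_single (f : ι × κ → ℝ) :
    ∑ j, ∑ p, f (p, j) • Pi.single (p, j) (1 : ℝ) = f := by
  rw [sum_comm, ← Fintype.sum_prod_type']
  simp only [← Pi.single_smul', smul_eq_mul, mul_one, univ_sum_single]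

theorem eq_sum_couplingWeight_smul (x : ι × κ → ℝ) (hx : ∀ j, ∑ i, x (i, j) = 0) :
    x = ∑ j, ∑ p, ∑ q, couplingWeight (fun i => x (i, j)) p q •
      (Pi.single (p, j) 1 - Pi.single (q, j) 1) := by
  simp only [smul_sub, sum_sub_distrib]
  conv_rhs => enter [2, 2, j]; rw [sum_comm]
  simp only [← sum_smul, sum_couplingWeight_right (hx _), sum_couplingWeight_left (hx _),
    sum_sum_smul_single (fun il => (x il)⁺), sum_sum_smul_single (fun il => (x il)⁻)]
  ext il
  exact (posPart_sub_negPart (x il)).symm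

end Decomposition

section Vbar

variable {N : ℕ}

/-- The vector `v_{p,q,j}` of `V̄`, except that `vbar p p j = 0`. -/
noncomputable def vbar (p q : Fin N) (j : Fin 2) : Fin N × Fin 2 → ℝ :=
  (2⁻¹ : ℝ) • (Pi.single (p, j) 1 - Pi.single (q, j) 1)

theorem vbar_eq_ite {p q : Fin N} (hpq : p ≠ q) (j : Fin 2) :
    vbar p q j = fun il =>
      if il = (p, j) then (1 / 2 : ℝ) else if il = (q, j) then -(1 / 2 : ℝ) else 0 := by
  funext il
  by_cases h₁ : il = (p, j)
  · subst h₁; simp [vbar, hpq]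
  · by_cases h₂ : il = (q, j)
    · subst h₂; simp [vbar, hpq.symm]
    · simp [vbar, h₁, h₂]

theorem vbar_mem_vertexSetVbar {p q : Fin N} (hpq : p ≠ q) (j : Fin 2) :
    vbar p q j ∈ vertexSetVbar N :=
  ⟨p, q, j, hpq, vbar_eq_ite hpq j⟩

theorem convex_crossPolytope2 : Convex ℝ (crossPolytope2 N) := by
  intro x hx y hy a b ha hb hab
  calc ∑ il, |a * x il + b * y il| ≤ ∑ il, (a * |x il| + b * |y il|) := by
        gcongr with il
        exact (abs_add_le _ _).trans_eq <| by
          rw [abs_mul, abs_mul, abs_of_nonneg ha, abs_of_nonneg hb]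
    _ = a * ∑ il, |x il| + b * ∑ il, |y il| := by rw [sum_add_distrib, mul_sum, mul_sum]
    _ ≤ a * 1 + b * 1 := by gcongr <;> assumption
    _ = 1 := by rw [mul_one, mul_one, hab]

theorem convex_subspaceHbar : Convex ℝ (subspaceHbar N) := by
  intro x hx y hy a b _ _ _ j
  simp only [Pi.add_apply, Pi.smul_apply, smul_eq_mul, sum_add_distrib, ← mul_sum, hx j, hy j,
    mul_zero, add_zero]

theorem single_mem_crossPolytope2 (il : Fin N × Fin 2) {c : ℝ} (hc : |c| ≤ 1) :
    Pi.single il c ∈ crossPolytope2 N := by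
  simpa [crossPolytope2, Pi.single_apply, apply_ite] using hc

theorem vbar_mem_crossPolytope2 (p q : Fin N) (j : Fin 2) : vbar p q j ∈ crossPolytope2 N := by
  have h₂ : (0 : ℝ) ≤ 2⁻¹ := by norm_num
  convert convex_crossPolytope2 (single_mem_crossPolytope2 (p, j) (c := 1) (by simp))
    (single_mem_crossPolytope2 (q, j) (c := -1) (by simp)) h₂ h₂ (by norm_num) using 1
  simp only [vbar, Pi.single_neg]
  module

theorem vbar_mem_subspaceHbar (p q : Fin N) (j : Fin 2) : vbar p q j ∈ subspaceHbar N := by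
  intro l
  simp [vbar, Pi.single_apply, ← mul_sum, sum_sub_distrib, ite_and]

theorem zero_mem_convexHull_vertexSetVbar (hN : 2 ≤ N) :
    (0 : Fin N × Fin 2 → ℝ) ∈ convexHull ℝ (vertexSetVbar N) := by
  let p : Fin N := ⟨0, by omega⟩
  let q : Fin N := ⟨1, by omega⟩
  have hpq : p ≠ q := by simp [p, q, Fin.ext_iff]
  have hv := subset_convexHull ℝ _ (vbar_mem_vertexSetVbar hpq 0)
  have hw := subset_convexHull ℝ _ (vbar_mem_vertexSetVbar hpq.symm 0)
  have h₂ : (0 : ℝ) ≤ 2⁻¹ := by norm_num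
  convert convex_convexHull ℝ _ hv hw h₂ h₂ (by norm_num) using 1
  simp only [vbar]
  module

theorem vbar_mem_convexHull_vertexSetVbar (hN : 2 ≤ N) (p q : Fin N) (j : Fin 2) :
    vbar p q j ∈ convexHull ℝ (vertexSetVbar N) := by
  rcases eq_or_ne p q with rfl | hpq
  · simpa [vbar] using zero_mem_convexHull_vertexSetVbar hN
  · exact subset_convexHull ℝ _ (vbar_mem_vertexSetVbar hpq j)

theorem vertexSetVbar_subset : vertexSetVbar N ⊆ crossPolytope2 N ∩ subspaceHbar N := by
  rintro _ ⟨p, q, j, hpq, rfl⟩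
  rw [← vbar_eq_ite hpq]
  exact ⟨vbar_mem_crossPolytope2 p q j, vbar_mem_subspaceHbar p q j⟩

theorem eq_sum_couplingWeight_smul_vbar (x : Fin N × Fin 2 → ℝ) (hx : x ∈ subspaceHbar N) :
    x = ∑ t : Fin 2 × Fin N × Fin N,
      (2 * couplingWeight (fun i => x (i, t.1)) t.2.1 t.2.2) • vbar t.2.1 t.2.2 t.1 := by
  conv_lhs => rw [eq_sum_couplingWeight_smul x hx]
  simp only [Fintype.sum_prod_type, vbar, smul_smul, mul_right_comm (2 : ℝ),
    mul_inv_cancel₀ (two_ne_zero' ℝ), one_mul]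

theorem sum_two_mul_couplingWeight_eq_sum_abs (x : Fin N × Fin 2 → ℝ)
    (hx : x ∈ subspaceHbar N) :
    ∑ t : Fin 2 × Fin N × Fin N, 2 * couplingWeight (fun i => x (i, t.1)) t.2.1 t.2.2 =
      ∑ il, |x il| := by
  simp only [Fintype.sum_prod_type, ← mul_sum, sum_sum_couplingWeight (hx _), ← sum_div]
  rw [sum_comm]
  ring

theorem convexHull_vertexSetVbar (hN : 2 ≤ N) :
    convexHull ℝ (vertexSetVbar N) = crossPolytope2 N ∩ subspaceHbar N := by
  refine (convexHull_min vertexSetVbar_subset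
    (convex_crossPolytope2.inter convex_subspaceHbar)).antisymm ?_
  rintro x ⟨hxP, hxH⟩
  rw [eq_sum_couplingWeight_smul_vbar x hxH]
  refine (convex_convexHull ℝ _).sum_smul_mem_of_sum_le_one
    (zero_mem_convexHull_vertexSetVbar hN) (fun t _ => ?_) ?_ (fun t _ => ?_)
  · exact mul_nonneg zero_le_two (couplingWeight_nonneg _ _ _)
  · rw [sum_two_mul_couplingWeight_eq_sum_abs x hxH]
    exact hxP
  · exact vbar_mem_convexHull_vertexSetVbar hN _ _ _

end Vbar

theorem sum_kronTr_apply {N : ℕ} {S : Matrix (Fin N) (Fin N) ℝ} (hS : ∀ i, ∑ j, S i j = 1)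
    (x : Fin N × Fin 2 → ℝ) (j : Fin 2) : ∑ i, kronTr S x (i, j) = ∑ k, x (k, j) := by
  simp only [kronTr]
  rw [sum_comm]
  simp only [← sum_mul, hS, one_mul]

theorem preimage_kronTr_subspaceHbar {N : ℕ} {S : Matrix (Fin N) (Fin N) ℝ}
    (hS : ∀ i, ∑ j, S i j = 1) : kronTr S ⁻¹' subspaceHbar N = subspaceHbar N := by
  ext x
  simp only [Set.mem_preimage, subspaceHbar, Set.mem_ofPred_eq, sum_kronTr_apply hS]

theorem image_convexHull_Vbar_eq_image_crossPolytope_inter_Hbar_general {N : ℕ} (hN : 2 ≤ N)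
    (α β : ℝ) (S : Matrix (Fin N) (Fin N) ℝ) (hS : Admissible α β S) :
    kronTr S '' convexHull ℝ (vertexSetVbar N) =
      (kronTr S '' crossPolytope2 N) ∩ subspaceHbar N := by
  rw [convexHull_vertexSetVbar hN, ← Set.image_inter_preimage, preimage_kronTr_subspaceHbar hS.1]

theorem image_convexHull_Vbar_eq_image_crossPolytope_inter_Hbar {N : ℕ} (hN : 2 ≤ N)
    (α β : ℝ) (hα : 0 < α ∧ α ≤ 1 / 2) (hβ : 0 ≤ β ∧ β < α / 2)
    (S : Matrix (Fin N) (Fin N) ℝ) (hS : Admissible α β S) :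
    kronTr S '' convexHull ℝ (vertexSetVbar N) =
      (kronTr S '' crossPolytope2 N) ∩ subspaceHbar N :=
  image_convexHull_Vbar_eq_image_crossPolytope_inter_Hbar_general hN α β S hS
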